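/- Let R be the affine geometric R-matrix on pairs of vectors in (C*)^n and suppose R(a,b)=(b',a'). Then the energy is preserved: E(b',a') = E(a,b), provided all quantities are well-defined (nonzero energies). -/

import Mathlib

/-- Cyclic shift of a vector (indexed `0,…,n-1`) by `i`. -/
noncomputable def cshift (n : ℕ) (a : ℕ → ℂ) (i : ℕ) : ℕ → ℂ := fun j => a ((j + i) % n)

/-- The energy `E(a,b) = ∑_{i=0}^{n-1} (∏_{j=1}^{i} b_j)(∏_{j=i+2}^{n} a_j)`. -/
noncomputable def energy (n : ℕ) (a b : ℕ → ℂ) : ℂ :=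
  ∑ i ∈ Finset.range n, (∏ j ∈ Finset.range i, b j) * ∏ j ∈ Finset.Ico (i + 1) n, a j

/-- The second output `a'` of the affine geometric R-matrix `R : (a,b) ↦ (b',a')`. -/
noncomputable def Ra (n : ℕ) (a b : ℕ → ℂ) : ℕ → ℂ := fun j =>
  a j * energy n (cshift n a j) (cshift n b j) /
    energy n (cshift n a (j + 1)) (cshift n b (j + 1))

/-- The first output `b'` of the affine geometric R-matrix `R : (a,b) ↦ (b',a')`. -/
noncomputable def Rb (n : ℕ) (a b : ℕ → ℂ) : ℕ → ℂ := fun j =>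
  b j * energy n (cshift n a (j + 1)) (cshift n b (j + 1)) /
    energy n (cshift n a j) (cshift n b j)

/-! Write `E_i` for the energy of the `i`-fold cyclic shifts, `A = ∏ a` and `B = ∏ b`.
Peeling a factor off either end of the energy gives `b_i E_{i+1} = a_i E_i + B - A`, hence
`(∏_{j<k} b_j) E_k = (∏_{j<k} a_j) E + (B - A) E^{(k)}`, where `E^{(k)} = energy k a b` is the
energy truncated to length `k`. The products of the `a'_j` and `b'_j` telescope, so
`E(b',a') = E² ∑_i (∏_{j<i} a_j)(∏_{i<j<n} b_j) / (E_i E_{i+1})`, and the closed form for `E_k`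
shows that the `k`-th partial sum of this series is `E^{(k)} (∏_{k≤j<n} b_j) / (E E_k)`, which is
`1 / E` at `k = n`. -/

open Finset

lemma prod_Ico_mul_div_telescope {K : Type*} [Field K] (f g : ℕ → K) (hg : ∀ j, g j ≠ 0)
    {m n : ℕ} (h : m ≤ n) :
    ∏ j ∈ Ico m n, f j * g (j + 1) / g j = (∏ j ∈ Ico m n, f j) * g n / g m := by
  induction n, h using Nat.le_induction with
  | base => simp [hg m]
  | succ n hmn ih =>
    rw [prod_Ico_succ_top hmn, prod_Ico_succ_top hmn, ih]
    field_simp [hg n, hg m]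

lemma energy_congr (n : ℕ) {a b a' b' : ℕ → ℂ}
    (ha : ∀ j < n, a j = a' j) (hb : ∀ j < n, b j = b' j) :
    energy n a b = energy n a' b' := by
  refine sum_congr rfl fun i hi => ?_
  rw [mem_range] at hi
  congr 1
  · exact prod_congr rfl fun j hj => hb j (by rw [mem_range] at hj; omega)
  · exact prod_congr rfl fun j hj => ha j (by rw [mem_Ico] at hj; omega)

lemma energy_succ (k : ℕ) (a b : ℕ → ℂ) :
    energy (k + 1) a b = energy k a b * a k + ∏ j ∈ range k, b j := by
  simp only [energy, sum_range_succ, Ico_self, prod_empty, mul_one, sum_mul]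
  congr 1
  refine sum_congr rfl fun i hi => ?_
  rw [prod_Ico_succ_top (by rw [mem_range] at hi; omega), mul_assoc]

lemma energy_succ' (m : ℕ) (a b : ℕ → ℂ) :
    energy (m + 1) a b =
      ∏ j ∈ range m, a (j + 1) + b 0 * energy m (fun j => a (j + 1)) (fun j => b (j + 1)) := by
  simp only [energy, sum_range_succ', mul_sum, prod_range_zero, one_mul]
  rw [add_comm]
  congr 1
  · rw [← prod_Ico_add' a 0 m 1, range_eq_Ico]
  · refine sum_congr rfl fun i _ => ?_
    rw [prod_range_succ', ← prod_Ico_add' a (i + 1) m 1]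
    ring

lemma cshift_cshift (n : ℕ) (a : ℕ → ℂ) (i k : ℕ) :
    cshift n (cshift n a i) k = cshift n a (i + k) := by
  funext j
  simp only [cshift, Nat.mod_add_mod]
  ring_nf

lemma cshift_apply_of_lt {n j : ℕ} (a : ℕ → ℂ) (i : ℕ) (hj : j + i < n) :
    cshift n a i j = a (j + i) := by
  rw [cshift, Nat.mod_eq_of_lt hj]

lemma prod_range_cshift (n : ℕ) (a : ℕ → ℂ) (i : ℕ) :
    ∏ j ∈ range n, cshift n a i j = ∏ j ∈ range n, a j := by
  rcases Nat.eq_zero_or_pos n with rfl | hn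
  · simp
  have := NeZero.of_pos hn
  simp only [cshift, ← Fin.prod_univ_eq_prod_range]
  exact Fintype.prod_equiv (Equiv.addRight (Fin.ofNat n i)) _ _
    fun j => by simp [Fin.val_add]

lemma mul_energy_cshift_one (n : ℕ) (a b : ℕ → ℂ) :
    b 0 * energy n (cshift n a 1) (cshift n b 1) =
      a 0 * energy n a b + ∏ j ∈ range n, b j - ∏ j ∈ range n, a j := by
  cases n with
  | zero => simp [energy]
  | succ m =>
    have hshift : ∀ c : ℕ → ℂ, ∀ j < m, cshift (m + 1) c 1 j = c (j + 1) :=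
      fun c j hj => cshift_apply_of_lt c 1 (by omega)
    have hlast : ∀ c : ℕ → ℂ, cshift (m + 1) c 1 m = c 0 := fun c => by simp [cshift]
    rw [energy_succ, energy_congr m (hshift a) (hshift b), hlast,
      prod_congr rfl fun j hj => hshift b j (mem_range.mp hj), energy_succ', prod_range_succ',
      prod_range_succ' a]
    ring

noncomputable def shiftedEnergy (n : ℕ) (a b : ℕ → ℂ) (i : ℕ) : ℂ :=
  energy n (cshift n a i) (cshift n b i)

section ShiftedEnergy

variable (n : ℕ) (a b : ℕ → ℂ)

lemma shiftedEnergy_zero : shiftedEnergy n a b 0 = energy n a b :=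
  energy_congr n (fun _ hj => cshift_apply_of_lt a 0 hj) (fun _ hj => cshift_apply_of_lt b 0 hj)

lemma shiftedEnergy_self : shiftedEnergy n a b n = energy n a b :=
  energy_congr n (fun _ hj => by simp [cshift, Nat.mod_eq_of_lt hj])
    (fun _ hj => by simp [cshift, Nat.mod_eq_of_lt hj])

lemma mul_shiftedEnergy_succ {i : ℕ} (hi : i < n) :
    b i * shiftedEnergy n a b (i + 1) =
      a i * shiftedEnergy n a b i + ∏ j ∈ range n, b j - ∏ j ∈ range n, a j := by
  have h := mul_energy_cshift_one n (cshift n a i) (cshift n b i)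
  rwa [cshift_cshift, cshift_cshift, prod_range_cshift, prod_range_cshift,
    cshift_apply_of_lt a i (by omega), cshift_apply_of_lt b i (by omega), zero_add] at h

lemma prod_mul_shiftedEnergy {k : ℕ} (hk : k ≤ n) :
    (∏ j ∈ range k, b j) * shiftedEnergy n a b k =
      (∏ j ∈ range k, a j) * energy n a b +
        (∏ j ∈ range n, b j - ∏ j ∈ range n, a j) * energy k a b := by
  induction k with
  | zero => simp [shiftedEnergy_zero, energy]
  | succ k ih =>
    rw [prod_range_succ, prod_range_succ, energy_succ]
    linear_combination (∏ j ∈ range k, b j) * mul_shiftedEnergy_succ n a b (i := k) (by omega) +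
      a k * ih (by omega)

variable {n a b}

lemma prod_range_Ra (hE : ∀ i, shiftedEnergy n a b i ≠ 0) (i : ℕ) :
    ∏ j ∈ range i, Ra n a b j =
      (∏ j ∈ range i, a j) * shiftedEnergy n a b 0 / shiftedEnergy n a b i := by
  have h := prod_Ico_mul_div_telescope a (fun k => (shiftedEnergy n a b k)⁻¹)
    (fun k => inv_ne_zero (hE k)) (Nat.zero_le i)
  rw [← range_eq_Ico] at h
  calc ∏ j ∈ range i, Ra n a b j
      = ∏ j ∈ range i, a j * (shiftedEnergy n a b (j + 1))⁻¹ / (shiftedEnergy n a b j)⁻¹ :=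
        prod_congr rfl fun j _ => by rw [div_inv_eq_mul, Ra, div_eq_mul_inv, mul_right_comm]; rfl
    _ = _ := by rw [h, div_inv_eq_mul]; ring

lemma prod_Ico_Rb (hE : ∀ i, shiftedEnergy n a b i ≠ 0) {m k : ℕ} (h : m ≤ k) :
    ∏ j ∈ Ico m k, Rb n a b j =
      (∏ j ∈ Ico m k, b j) * shiftedEnergy n a b k / shiftedEnergy n a b m :=
  prod_Ico_mul_div_telescope b _ hE h

lemma sum_range_div_shiftedEnergy_mul (hE : ∀ i, shiftedEnergy n a b i ≠ 0) {k : ℕ}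
    (hk : k ≤ n) :
    ∑ i ∈ range k, (∏ j ∈ range i, a j) * (∏ j ∈ Ico (i + 1) n, b j) /
        (shiftedEnergy n a b i * shiftedEnergy n a b (i + 1)) =
      energy k a b * (∏ j ∈ Ico k n, b j) / (energy n a b * shiftedEnergy n a b k) := by
  induction k with
  | zero => simp [energy]
  | succ k ih =>
    have hE0 : energy n a b ≠ 0 := shiftedEnergy_zero n a b ▸ hE 0
    rw [sum_range_succ, ih (by omega), energy_succ, prod_eq_prod_Ico_succ_bot (by omega : k < n) b]
    field_simp [hE k, hE (k + 1)]
    linear_combination (∏ j ∈ Ico (k + 1) n, b j) *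
      (energy k a b * mul_shiftedEnergy_succ n a b (i := k) (by omega) -
        prod_mul_shiftedEnergy n a b (k := k) (by omega))

end ShiftedEnergy

theorem energy_invariant_of_R_general (n : ℕ) (a b : ℕ → ℂ)
    (hE : ∀ i, energy n (cshift n a i) (cshift n b i) ≠ 0) :
    energy n (Rb n a b) (Ra n a b) = energy n a b := by
  have hE' : ∀ i, shiftedEnergy n a b i ≠ 0 := hE
  have hE0 : energy n a b ≠ 0 := shiftedEnergy_zero n a b ▸ hE' 0
  calc energy n (Rb n a b) (Ra n a b)
      = energy n a b ^ 2 * ∑ i ∈ range n, (∏ j ∈ range i, a j) * (∏ j ∈ Ico (i + 1) n, b j) /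
          (shiftedEnergy n a b i * shiftedEnergy n a b (i + 1)) := by
        rw [energy, mul_sum]
        refine sum_congr rfl fun i hi => ?_
        rw [prod_range_Ra hE', prod_Ico_Rb hE' (mem_range.mp hi), shiftedEnergy_zero,
          shiftedEnergy_self]
        ring
    _ = energy n a b := by
        rw [sum_range_div_shiftedEnergy_mul hE' le_rfl, Ico_self, prod_empty, shiftedEnergy_self]
        field_simp

/-- The affine geometric R-matrix preserves the energy: if `R(a,b) = (b',a')`
then `E(b',a') = E(a,b)`. -/
theorem energy_invariant_of_R (n : ℕ) (hn : 1 ≤ n) (a b : ℕ → ℂ)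
    (ha : ∀ j, a j ≠ 0) (hb : ∀ j, b j ≠ 0)
    (hE : ∀ i, energy n (cshift n a i) (cshift n b i) ≠ 0) :
    energy n (Rb n a b) (Ra n a b) = energy n a b :=
  energy_invariant_of_R_general n a b hE
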